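/- arXiv:2004.06149 — 2 statements merged into one kernel-verified Lean document; each statement's English description precedes it below -/
import Mathlib

section
/- With B_w defined as the block matrix with B₀ in the upper-left, w copies of the column b, w copies of the row bᵀ, and uw·I_w in the lower-right: if B₁ = [[B₀, b],[bᵀ, u]] is invertible with inverse written in block form [[A, c],[cᵀ, z]], then B_w is invertible with inverse given by the block matrix with A in the upper-left n×n block, c/w repeated in each of the last w columns of the first n rows, cᵀ/w repeated in each of the last w rows of the first n columns, and lower-right w×w block equal to ((zu−1)/(w²u))·J_w + (1/(uw))·I_w, where J_w is the w×w all-ones matrix. -/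
/-!
Multiplying out the blocks, the product of `B_w` with the proposed inverse reduces blockwise to
the four identities `B₀A + bcᵀ = I`, `B₀c + zb = 0`, `bᵀA + ucᵀ = 0`, `bᵀc + uz = 1` read off from
`B₁B₁⁻¹ = I`: the `w` copies of `b` are compensated by the factor `1/w` on `c`, and every column
of the lower-right block sums to `z/w`. A one-sided inverse of a square matrix is two-sided.
-/

open Matrix

namespace Matrix

variable {K ι κ : Type*} [Fintype ι]

theorem fromBlocks_replicate_mul_fromBlocks_replicate [Semiring K] [Fintype κ] [DecidableEq κ]
    (B₀ A : Matrix ι ι K) (b c : ι → K) (s : K) (D : Matrix κ κ K) :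
    fromBlocks B₀ (replicateCol κ b) (replicateRow κ b) (s • 1) *
        fromBlocks A (replicateCol κ c) (replicateRow κ c) D =
      fromBlocks (B₀ * A + Fintype.card κ • vecMulVec b c)
        (of fun i l => (B₀ *ᵥ c) i + b i * ∑ k, D k l)
        (replicateRow κ (b ᵥ* A + s • c))
        (of fun k l => b ⬝ᵥ c + s * D k l) := by
  rw [fromBlocks_multiply]
  congr 1 <;> ext
  all_goals simp [mul_apply, vecMulVec_apply, mulVec, vecMul, dotProduct, Finset.mul_sum]

variable [Field K] [DecidableEq ι]

theorem fromBlocks_replicate_fin_one_mul_eq_one_iff (B₀ A : Matrix ι ι K) (b c : ι → K)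
    (u z : K) :
    fromBlocks B₀ (replicateCol (Fin 1) b) (replicateRow (Fin 1) b) (u • 1) *
        fromBlocks A (replicateCol (Fin 1) c) (replicateRow (Fin 1) c) (z • 1) = 1 ↔
      B₀ * A + vecMulVec b c = 1 ∧ B₀ *ᵥ c + z • b = 0 ∧ b ᵥ* A + u • c = 0 ∧
        b ⬝ᵥ c + u * z = 1 := by
  rw [fromBlocks_replicate_mul_fromBlocks_replicate, ← fromBlocks_one, fromBlocks_inj]
  simp only [Fintype.card_unique, one_smul, replicateRow_eq_zero]
  refine and_congr Iff.rfl (and_congr ?_ (and_congr Iff.rfl ?_))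
  · simp [← Matrix.ext_iff, funext_iff, mul_comm]
  · simp [← Matrix.ext_iff]

theorem fromBlocks_replicate_mul_eq_one {w : ℕ} (hw : (w : K) ≠ 0)
    {B₀ A : Matrix ι ι K} {b c : ι → K} {u z : K} (hu : u ≠ 0)
    (hA : B₀ * A + vecMulVec b c = 1) (hc : B₀ *ᵥ c + z • b = 0) (hb : b ᵥ* A + u • c = 0)
    (hbc : b ⬝ᵥ c + u * z = 1) :
    fromBlocks B₀ (replicateCol (Fin w) b) (replicateRow (Fin w) b) ((u * w) • 1) *
      fromBlocks A (replicateCol (Fin w) fun i => c i / w) (replicateRow (Fin w) fun j => c j / w)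
        (of fun i j => (z * u - 1) / ((w : K) ^ 2 * u) + if i = j then 1 / (u * w) else 0) =
      1 := by
  have hcw : (fun i => c i / (w : K)) = (w : K)⁻¹ • c := by
    ext i; simp [div_eq_inv_mul]
  rw [fromBlocks_replicate_mul_fromBlocks_replicate, ← fromBlocks_one, hcw]
  congr 1
  · rw [Fintype.card_fin, vecMulVec_smul, ← Nat.cast_smul_eq_nsmul K, smul_smul,
      mul_inv_cancel₀ hw, one_smul, hA]
  · ext i l
    have hci := congrFun hc i
    simp only [Pi.add_apply, Pi.smul_apply, smul_eq_mul, Pi.zero_apply, mulVec_smul, one_div,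
      _root_.mul_inv_rev, of_apply, Finset.sum_add_distrib, Finset.sum_const, Finset.card_univ,
      Fintype.card_fin, nsmul_eq_mul, Finset.sum_ite_eq', Finset.mem_univ, ↓reduceIte,
      zero_apply] at hci ⊢
    field_simp
    linear_combination u * hci
  · rw [smul_smul, mul_assoc, mul_inv_cancel₀ hw, mul_one, hb, replicateRow_zero]
  · ext k l
    simp only [dotProduct_smul, smul_eq_mul, one_div, _root_.mul_inv_rev, of_apply, one_apply]
    split_ifs <;> field_simp <;> linear_combination hbc

end Matrix

theorem stmt_1_general (n w : ℕ) (hw : 1 ≤ w)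
    (B₀ A : Matrix (Fin n) (Fin n) ℝ) (b c : Fin n → ℝ) (u z : ℝ) (hu : u ≠ 0)
    (hinv₁ : Matrix.fromBlocks B₀ (fun i _ => b i) (fun _ j => b j)
        (u • (1 : Matrix (Fin 1) (Fin 1) ℝ)) *
      Matrix.fromBlocks A (fun i _ => c i) (fun _ j => c j)
        (z • (1 : Matrix (Fin 1) (Fin 1) ℝ)) = 1) :
    Matrix.fromBlocks B₀ (fun i _ => b i) (fun _ j => b j)
        ((u * w) • (1 : Matrix (Fin w) (Fin w) ℝ)) *
      Matrix.fromBlocks A (fun i _ => c i / w) (fun _ j => c j / w)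
        (Matrix.of fun i j =>
          (z * u - 1) / ((w : ℝ) ^ 2 * u) + if i = j then 1 / (u * w) else 0) = 1 ∧
    Matrix.fromBlocks A (fun i _ => c i / w) (fun _ j => c j / w)
        (Matrix.of fun i j =>
          (z * u - 1) / ((w : ℝ) ^ 2 * u) + if i = j then 1 / (u * w) else 0) *
      Matrix.fromBlocks B₀ (fun i _ => b i) (fun _ j => b j)
        ((u * w) • (1 : Matrix (Fin w) (Fin w) ℝ)) = 1 := by
  obtain ⟨hA, hc, hb, hbc⟩ := (fromBlocks_replicate_fin_one_mul_eq_one_iff B₀ A b c u z).mp hinv₁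
  have hw₀ : (w : ℝ) ≠ 0 := Nat.cast_ne_zero.mpr (by omega)
  have hB := fromBlocks_replicate_mul_eq_one hw₀ hu hA hc hb hbc
  exact ⟨hB, mul_eq_one_comm.mp hB⟩

theorem stmt_1 (n w : ℕ) (hw : 1 ≤ w)
    (B₀ A : Matrix (Fin n) (Fin n) ℝ) (b c : Fin n → ℝ) (u z : ℝ) (hu : u ≠ 0)
    (hinv₁ : Matrix.fromBlocks B₀ (fun i _ => b i) (fun _ j => b j)
        (u • (1 : Matrix (Fin 1) (Fin 1) ℝ)) *
      Matrix.fromBlocks A (fun i _ => c i) (fun _ j => c j)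
        (z • (1 : Matrix (Fin 1) (Fin 1) ℝ)) = 1)
    (hinv₂ : Matrix.fromBlocks A (fun i _ => c i) (fun _ j => c j)
        (z • (1 : Matrix (Fin 1) (Fin 1) ℝ)) *
      Matrix.fromBlocks B₀ (fun i _ => b i) (fun _ j => b j)
        (u • (1 : Matrix (Fin 1) (Fin 1) ℝ)) = 1) :
    Matrix.fromBlocks B₀ (fun i _ => b i) (fun _ j => b j)
        ((u * w) • (1 : Matrix (Fin w) (Fin w) ℝ)) *
      Matrix.fromBlocks A (fun i _ => c i / w) (fun _ j => c j / w)
        (Matrix.of fun i j =>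
          (z * u - 1) / ((w : ℝ) ^ 2 * u) + if i = j then 1 / (u * w) else 0) = 1 ∧
    Matrix.fromBlocks A (fun i _ => c i / w) (fun _ j => c j / w)
        (Matrix.of fun i j =>
          (z * u - 1) / ((w : ℝ) ^ 2 * u) + if i = j then 1 / (u * w) else 0) *
      Matrix.fromBlocks B₀ (fun i _ => b i) (fun _ j => b j)
        ((u * w) • (1 : Matrix (Fin w) (Fin w) ℝ)) = 1 :=
  stmt_1_general n w hw B₀ A b c u z hu hinv₁
end

section
/- Let y ∈ ℝⁿ and x ∈ ℝ. For w ≥ 1, define y_w ∈ ℝ^{n+w} as the concatenation of y with w copies of x, and let B_w be the block matrix with B₀ in the upper-left, w copies of b in the columns, and uw·I_w in the lower-right, with B₁ invertible. Then y_wᵀ B_w⁻¹ y_w = y₁ᵀ B₁⁻¹ y₁ for all w ≥ 1, where y₁ is y concatenated with a single copy of x. -/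
/-!
If `(p, q)` solves `B₁ (p, q) = (y, x)`, then spreading the last coordinate evenly gives the
solution `(p, q/w, …, q/w)` of `B_w v = y_w`: the column `b` is hit `w` times and the diagonal
entry `u w` absorbs the factor `1/w`. Both quadratic forms are then `y ⬝ p + x q`. The matrix
`B_w` is invertible because its Schur complement `B₀ - (w / (u w)) b bᵀ` is that of `B₁`.
-/

open Matrix

section Bordered

variable {K ι κ : Type*} [Field K] [Fintype ι] [Fintype κ] [DecidableEq κ]

def borderedMatrix (B₀ : Matrix ι ι K) (b : ι → K) (c : K) : Matrix (ι ⊕ κ) (ι ⊕ κ) K :=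
  fromBlocks B₀ (replicateCol κ b) (replicateRow κ b) (c • 1)

theorem borderedMatrix_mulVec_sumElim_const (B₀ : Matrix ι ι K) (b p : ι → K) (c r : K) :
    borderedMatrix B₀ b c *ᵥ Sum.elim p (fun _ : κ => r) =
      Sum.elim (B₀ *ᵥ p + (Fintype.card κ * r) • b) (fun _ => b ⬝ᵥ p + c * r) := by
  ext (i | k)
  · simp [borderedMatrix, mulVec, dotProduct]
    ring
  · simp [borderedMatrix, mulVec, dotProduct, one_apply]

theorem borderedMatrix_mulVec_sumElim_const_eq_iff [Nonempty κ] (B₀ : Matrix ι ι K)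
    (b p y : ι → K) (c r x : K) :
    borderedMatrix B₀ b c *ᵥ Sum.elim p (fun _ : κ => r) = Sum.elim y (fun _ => x) ↔
      B₀ *ᵥ p + (Fintype.card κ * r) • b = y ∧ b ⬝ᵥ p + c * r = x := by
  simp [borderedMatrix_mulVec_sumElim_const, funext_iff]

theorem isUnit_borderedMatrix_iff [DecidableEq ι] {c : K} (hc : c ≠ 0) (B₀ : Matrix ι ι K)
    (b : ι → K) :
    IsUnit (borderedMatrix B₀ b c : Matrix (ι ⊕ κ) (ι ⊕ κ) K) ↔
      IsUnit (B₀ - (Fintype.card κ / c) • vecMulVec b b) := by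
  have hinv : (c • 1 : Matrix κ κ K) * (c⁻¹ • 1) = 1 := by
    rw [smul_mul_smul_comm, mul_inv_cancel₀ hc, one_mul, one_smul]
  let := invertibleOfRightInverse _ _ hinv
  rw [borderedMatrix, isUnit_fromBlocks_iff_of_invertible₂₂, invOf_eq_right_inv hinv]
  congr! 2
  ext i j
  simp [mul_apply, vecMulVec_apply, div_eq_mul_inv]
  ring

end Bordered

theorem sumElim_const_dotProduct_sumElim_const {R ι κ : Type*} [CommSemiring R] [Fintype ι]
    [Fintype κ] (y p : ι → R) (x r : R) :
    Sum.elim y (fun _ : κ => x) ⬝ᵥ Sum.elim p (fun _ => r) = y ⬝ᵥ p + Fintype.card κ * (x * r) := by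
  rw [sumElim_dotProduct_sumElim]
  simp [dotProduct]

theorem stmt_2 (n w : ℕ) (hw : 1 ≤ w)
    (B₀ : Matrix (Fin n) (Fin n) ℝ) (b : Fin n → ℝ) (u : ℝ) (hu : u ≠ 0)
    (y : Fin n → ℝ) (x : ℝ)
    (hB₁ : IsUnit (Matrix.fromBlocks B₀ (fun i _ => b i) (fun _ j => b j)
        (u • (1 : Matrix (Fin 1) (Fin 1) ℝ))).det) :
    (Sum.elim y fun _ : Fin w => x) ⬝ᵥ
      ((Matrix.fromBlocks B₀ (fun i _ => b i) (fun _ j => b j)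
          ((u * w) • (1 : Matrix (Fin w) (Fin w) ℝ)))⁻¹ *ᵥ
        (Sum.elim y fun _ : Fin w => x)) =
    (Sum.elim y fun _ : Fin 1 => x) ⬝ᵥ
      ((Matrix.fromBlocks B₀ (fun i _ => b i) (fun _ j => b j)
          (u • (1 : Matrix (Fin 1) (Fin 1) ℝ)))⁻¹ *ᵥ
        (Sum.elim y fun _ : Fin 1 => x)) := by
  have hw₀ : (w : ℝ) ≠ 0 := Nat.cast_ne_zero.2 (by omega)
  have : Nonempty (Fin w) := ⟨⟨0, hw⟩⟩
  change _ ⬝ᵥ ((borderedMatrix B₀ b (u * w))⁻¹ *ᵥ _) = _ ⬝ᵥ ((borderedMatrix B₀ b u)⁻¹ *ᵥ _)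
  change IsUnit (borderedMatrix B₀ b u : Matrix (Fin n ⊕ Fin 1) _ ℝ).det at hB₁
  have hBw : IsUnit (borderedMatrix B₀ b (u * w) : Matrix (Fin n ⊕ Fin w) _ ℝ) := by
    rw [← isUnit_iff_isUnit_det, isUnit_borderedMatrix_iff hu] at hB₁
    rw [isUnit_borderedMatrix_iff (mul_ne_zero hu hw₀)]
    convert hB₁ using 3
    simp only [Fintype.card_fin, Nat.cast_one]
    field_simp
  obtain ⟨p, q, hpq⟩ : ∃ p q, (borderedMatrix B₀ b u)⁻¹ *ᵥ Sum.elim y (fun _ : Fin 1 => x) =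
      Sum.elim p (fun _ => q) :=
    ⟨_, _, (Sum.elim_comp_inl_inr _).symm.trans (congrArg _ (funext fun i => by
      rw [Subsingleton.elim i 0]))⟩
  have hsol₁ : B₀ *ᵥ p + q • b = y ∧ b ⬝ᵥ p + u * q = x := by
    have h := congrArg (borderedMatrix B₀ b u *ᵥ ·) hpq
    simp only [mulVec_mulVec, mul_nonsing_inv _ hB₁, one_mulVec] at h
    simpa using (borderedMatrix_mulVec_sumElim_const_eq_iff ..).1 h.symm
  have hsol_w : borderedMatrix B₀ b (u * w) *ᵥ Sum.elim p (fun _ : Fin w => q / w) =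
      Sum.elim y (fun _ => x) := by
    rw [borderedMatrix_mulVec_sumElim_const_eq_iff, Fintype.card_fin, mul_div_cancel₀ _ hw₀,
      mul_assoc, mul_div_cancel₀ _ hw₀]
    exact hsol₁
  let := hBw.invertible
  rw [hpq, inv_mulVec_eq_vec hsol_w.symm, sumElim_const_dotProduct_sumElim_const,
    sumElim_const_dotProduct_sumElim_const, Fintype.card_fin, Fintype.card_fin, Nat.cast_one]
  field_simp
end
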